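/- For every prime p with p ≡ 1 (mod 4), 64^p·((1/4)_p)^2/(p!)^2 ≡ (1/3)·C(4p,2p)·C(2p,p) (mod p^2), where both sides are integers (up to the unit 1/3 mod p^2, with p > 3). -/

import Mathlib

/-!
Put `A = ∏_{k<p} (4k+1) = 4^p (1/4)_p` and `B = ∏_{k<p} (4k+3)`. Then `s_p = 4^p A² / p!²`
and `C(4p,2p) C(2p,p) = 4^p A B / p!²`, so it suffices that `p⁴ ∣ A (3A - B)`. The factor
`4k₀+1 = p` gives `p ∣ A`. Write `a_k = 4k+1`, and let a prime on `∏`, `∑` mean that `k = k₀`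
is omitted. Reflecting `k ↦ p-1-k` turns `B` into `3p ∏' (a_k - 4p)`, so
`3A - B = 3p (∏' a_k - ∏' (a_k - 4p))`. To first order in `4p` this is
`3p · 4p · ∑' ∏'_{j ≠ k} a_j = 3p · 4p · ∏' a_k · ∑' a_k⁻¹`, and `∑' a_k⁻¹ ≡ 0 (mod p)`
because the `a_k` run over the nonzero residues mod `p`.
-/

open Finset Polynomial Nat

theorem Finset.sq_dvd_prod_add_sub_prod_sub_sum_prod_erase {ι R : Type*} [CommRing R]
    [DecidableEq ι] (s : Finset ι) (f : ι → R) (t : R) :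
    t ^ 2 ∣ ∏ i ∈ s, (f i + t) - ∏ i ∈ s, f i - t * ∑ i ∈ s, ∏ j ∈ s.erase i, f j := by
  obtain ⟨k, hk⟩ := binomExpansion (∏ i ∈ s, (C (f i) + X)) 0 t
  simp only [zero_add, eval_prod, eval_add, eval_X, eval_C, derivative_prod_finset,
    derivative_add, derivative_X, derivative_C, add_zero, mul_one, eval_finsetSum] at hk
  exact ⟨k, by rw [hk]; ring⟩

theorem Finset.sum_prod_erase_eq_prod_mul_sum_inv {ι K : Type*} [Field K] [DecidableEq ι]
    (s : Finset ι) {g : ι → K} (hg : ∀ i ∈ s, g i ≠ 0) :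
    ∑ i ∈ s, ∏ j ∈ s.erase i, g j = (∏ i ∈ s, g i) * ∑ i ∈ s, (g i)⁻¹ := by
  rw [mul_sum]
  refine sum_congr rfl fun i hi ↦ ?_
  rw [← mul_prod_erase s g hi, mul_right_comm, mul_inv_cancel₀ (hg i hi), one_mul]

theorem ZMod.sum_range_natCast {n : ℕ} [NeZero n] {M : Type*} [AddCommMonoid M]
    (f : ZMod n → M) :
    ∑ k ∈ range n, f k = ∑ x, f x :=
  sum_nbij' (↑) ZMod.val (fun _ _ ↦ mem_univ _) (fun x _ ↦ mem_range.2 x.val_lt)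
    (fun _ hk ↦ ZMod.val_natCast_of_lt (mem_range.1 hk)) (fun x _ ↦ ZMod.natCast_zmod_val x)
    fun _ _ ↦ rfl

theorem FiniteField.sum_inv_eq_zero {K : Type*} [Field K] [Fintype K]
    (hK : Fintype.card K ≠ 2) :
    ∑ x : K, x⁻¹ = 0 := by
  have : 1 < Fintype.card K - 1 := by have := Fintype.one_lt_card (α := K); omega
  exact (Equiv.sum_comp (Equiv.inv K) id).trans
    (by simpa using sum_pow_lt_card_sub_one (K := K) 1 this)

theorem prime_dvd_sum_prod_erase_mul_add {p : ℕ} [Fact p.Prime] (hp2 : p ≠ 2) {a b : ℤ}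
    (ha : ¬ (p : ℤ) ∣ a) {k₀ : ℕ} (hk₀ : k₀ < p) (hroot : (p : ℤ) ∣ a * k₀ + b) :
    (p : ℤ) ∣ ∑ k ∈ (range p).erase k₀, ∏ j ∈ ((range p).erase k₀).erase k, (a * j + b) := by
  rw [← ZMod.intCast_zmod_eq_zero_iff_dvd] at ha hroot ⊢
  push_cast at hroot ⊢
  have hne : ∀ k ∈ (range p).erase k₀, (a * k + b : ZMod p) ≠ 0 := by
    intro k hk hzero
    obtain ⟨hkk₀, hk⟩ := mem_erase.1 hk
    have : (k : ZMod p) = k₀ := mul_left_cancel₀ ha (by linear_combination hzero - hroot)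
    exact hkk₀ (by simpa [ZMod.natCast_eq_natCast_iff', Nat.mod_eq_of_lt (mem_range.1 hk),
      Nat.mod_eq_of_lt hk₀] using this)
  have hshift : ∑ x : ZMod p, ((a : ZMod p) * x + b)⁻¹ = ∑ x : ZMod p, x⁻¹ :=
    ((Equiv.mulLeft₀ _ ha).trans (Equiv.addRight _)).sum_comp (·⁻¹)
  rw [sum_prod_erase_eq_prod_mul_sum_inv _ hne, sum_erase _ (by rw [hroot, inv_zero]),
    ZMod.sum_range_natCast (fun x : ZMod p ↦ ((a : ZMod p) * x + b)⁻¹), hshift,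
    FiniteField.sum_inv_eq_zero (by rwa [ZMod.card]), mul_zero]

theorem prod_range_four_mul_add_three (n : ℕ) :
    ∏ k ∈ range n, (4 * k + 3 : ℤ) = (-1) ^ n * ∏ k ∈ range n, (4 * k + 1 - 4 * n : ℤ) := by
  rw [← prod_range_reflect, show (-1 : ℤ) ^ n = ∏ _k ∈ range n, -1 by simp, ← prod_mul_distrib]
  refine prod_congr rfl fun k hk ↦ ?_
  rw [Nat.cast_sub (by simp at hk; omega), Nat.cast_sub (by simp at hk; omega)]
  push_cast
  ring

theorem prime_pow_four_dvd_prod_mul_three_mul_prod_sub_prod {p : ℕ} (hp : p.Prime)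
    (h4 : p % 4 = 1) :
    (p : ℤ) ^ 4 ∣ (∏ k ∈ range p, (4 * k + 1 : ℤ)) *
      (3 * ∏ k ∈ range p, (4 * k + 1 : ℤ) - ∏ k ∈ range p, (4 * k + 3 : ℤ)) := by
  have := Fact.mk hp
  have hp5 : 5 ≤ p := by have := hp.two_le; omega
  set k₀ := (p - 1) / 4
  have hk₀ : (4 * k₀ + 1 : ℤ) = p := by norm_cast; omega
  have hk₀p : k₀ ∈ range p := mem_range.2 (by omega)
  set s := (range p).erase k₀
  set A := ∏ k ∈ s, (4 * k + 1 : ℤ)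
  set C := ∏ k ∈ s, (4 * k + 1 - 4 * p : ℤ)
  set S := ∑ k ∈ s, ∏ j ∈ s.erase k, (4 * j + 1 : ℤ)
  have hA : ∏ k ∈ range p, (4 * k + 1 : ℤ) = p * A := by
    rw [← mul_prod_erase _ _ hk₀p, hk₀]
  have hB : ∏ k ∈ range p, (4 * k + 3 : ℤ) = 3 * p * C := by
    rw [prod_range_four_mul_add_three, ← mul_prod_erase _ _ hk₀p, hk₀,
      (Nat.odd_iff.2 (by omega)).neg_one_pow]
    ring
  have hS : (p : ℤ) ∣ S :=
    prime_dvd_sum_prod_erase_mul_add (by omega) (a := 4) (b := 1)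
      (by exact_mod_cast Nat.not_dvd_of_pos_of_lt (by norm_num) (by omega)) (by omega)
      (by rw [hk₀])
  have hAC : (p : ℤ) ^ 2 ∣ A - C := by
    obtain ⟨m, hm⟩ :=
      sq_dvd_prod_add_sub_prod_sub_sum_prod_erase s (fun k ↦ (4 * k + 1 : ℤ)) (-(4 * p))
    obtain ⟨d, hd⟩ := hS
    simp only [← sub_eq_add_neg] at hm
    exact ⟨4 * d - 16 * m, by linear_combination -hm + 4 * p * hd⟩
  obtain ⟨e, he⟩ := hAC
  exact ⟨A * (3 * e), by rw [hA, hB]; linear_combination 3 * p ^ 2 * A * he⟩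

theorem ascPochhammer_eval_eq_prod_range {R : Type*} [CommSemiring R] (n : ℕ) (r : R) :
    (ascPochhammer R n).eval r = ∏ i ∈ range n, (r + i) := by
  induction n with
  | zero => simp
  | succ n ih => simp [ascPochhammer_succ_right, ih, ← prod_range_succ]

theorem four_pow_mul_ascPochhammer_eval_quarter (n : ℕ) :
    (4 : ℚ) ^ n * (ascPochhammer ℚ n).eval (1 / 4) = ∏ k ∈ range n, (4 * k + 1 : ℚ) := by
  rw [ascPochhammer_eval_eq_prod_range, show (4 : ℚ) ^ n = ∏ _k ∈ range n, 4 by simp,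
    ← prod_mul_distrib]
  exact prod_congr rfl fun k _ ↦ by ring

theorem Nat.factorial_four_mul (n : ℕ) :
    (4 * n)! =
      4 ^ n * (2 * n)! * (∏ k ∈ range n, (4 * k + 1)) * ∏ k ∈ range n, (4 * k + 3) := by
  induction n with
  | zero => simp
  | succ n ih =>
    rw [show 4 * (n + 1) = 4 * n + 3 + 1 by ring, show 2 * (n + 1) = 2 * n + 1 + 1 by ring]
    simp only [factorial_succ, prod_range_succ, ih]
    ring

theorem Nat.choose_four_mul_mul_choose_two_mul_mul_factorial_sq (n : ℕ) :
    (4 * n).choose (2 * n) * (2 * n).choose n * n ! ^ 2 =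
      4 ^ n * (∏ k ∈ range n, (4 * k + 1)) * ∏ k ∈ range n, (4 * k + 3) := by
  refine Nat.eq_of_mul_eq_mul_right (factorial_pos (2 * n)) ?_
  have h4 := choose_mul_factorial_mul_factorial (show 2 * n ≤ 4 * n by omega)
  have h2 := choose_mul_factorial_mul_factorial (show n ≤ 2 * n by omega)
  rw [show 4 * n - 2 * n = 2 * n by omega] at h4
  rw [show 2 * n - n = n by omega] at h2
  calc _ = (4 * n).choose (2 * n) * ((2 * n).choose n * n ! * n !) * (2 * n)! := by ring
    _ = (4 * n)! := by rw [h2, ← h4, mul_assoc]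
    _ = _ := by rw [factorial_four_mul]; ring

theorem sixtyFour_pow_mul_ascPochhammer_sq_div_sub_choose_mul_choose (n : ℕ) :
    (64 : ℚ) ^ n * ((ascPochhammer ℚ n).eval (1 / 4)) ^ 2 / (n ! : ℚ) ^ 2
        - (1 / 3) * ((4 * n).choose (2 * n) : ℚ) * ((2 * n).choose n : ℚ) =
      4 ^ n * (((∏ k ∈ range n, (4 * k + 1 : ℤ)) *
        (3 * ∏ k ∈ range n, (4 * k + 1 : ℤ) - ∏ k ∈ range n, (4 * k + 3 : ℤ)) : ℤ) : ℚ) /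
          (3 * (n ! : ℚ) ^ 2) := by
  have hchoose :=
    congrArg (Nat.cast : ℕ → ℚ) (choose_four_mul_mul_choose_two_mul_mul_factorial_sq n)
  push_cast at hchoose ⊢
  have h64 : (64 : ℚ) ^ n = 4 ^ n * (4 ^ n) ^ 2 := by
    rw [← pow_mul, mul_comm n 2, pow_mul, ← mul_pow]; norm_num
  rw [h64, mul_assoc, ← mul_pow, four_pow_mul_ascPochhammer_eval_quarter]
  field_simp
  linear_combination -hchoose

theorem padicNorm.intCast_div_le_of_pow_dvd {p : ℕ} [Fact p.Prime] {a b : ℤ} {k : ℕ}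
    (ha : (p : ℤ) ^ k ∣ a) (hb : ¬ (p : ℤ) ∣ b) :
    padicNorm p ((a : ℚ) / b) ≤ (p : ℚ) ^ (-(k : ℤ)) := by
  rw [padicNorm.div, (padicNorm.int_eq_one_iff b).2 hb, div_one]
  exact padicNorm.dvd_iff_norm_le.1 (by exact_mod_cast ha)

/-- For every prime `p ≡ 1 (mod 4)`,
`64^p ((1/4)_p)^2/(p!)^2 ≡ (1/3) C(4p,2p) C(2p,p) (mod p^2)`. -/
theorem s_p_choose_cong (p : ℕ) (hp : p.Prime) (h4 : p % 4 = 1) :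
    padicNorm p
      ((64 : ℚ) ^ p * ((ascPochhammer ℚ p).eval (1/4)) ^ 2 / (p.factorial : ℚ) ^ 2
        - (1 / 3) * ((4 * p).choose (2 * p) : ℚ) * ((2 * p).choose p : ℚ))
      ≤ (p : ℚ) ^ (-(2 : ℤ)) := by
  have := Fact.mk hp
  have hp5 : 5 ≤ p := by have := hp.two_le; omega
  obtain ⟨c, hc⟩ := prime_pow_four_dvd_prod_mul_three_mul_prod_sub_prod hp h4
  have hcancel : (4 : ℚ) ^ p * ((p ^ 4 * c : ℤ) : ℚ) / (3 * ((p * (p - 1)! : ℕ) : ℚ) ^ 2) =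
      ((p ^ 2 * (4 ^ p * c) : ℤ) : ℚ) / ((3 * (p - 1)! ^ 2 : ℤ) : ℚ) := by
    push_cast
    field_simp
  rw [sixtyFour_pow_mul_ascPochhammer_sq_div_sub_choose_mul_choose, hc,
    ← Nat.mul_factorial_pred hp.ne_zero, hcancel]
  refine padicNorm.intCast_div_le_of_pow_dvd (dvd_mul_right _ _) ?_
  have h3 : ¬ p ∣ 3 := Nat.not_dvd_of_pos_of_lt (by norm_num) (by omega)
  have hf : ¬ p ∣ (p - 1)! := by rw [hp.dvd_factorial]; omega
  exact_mod_cast fun h ↦ (hp.dvd_mul.1 h).elim h3 (hf ∘ hp.dvd_of_dvd_pow)
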